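/- Any automaton with independence is a distributed asynchronous automaton: if a quintuple (S, s0, E, I, Tran) satisfies determinism (axiom (i)) and the axiom (ii)' — for every state s and every pair (a1,a2) ∈ I_s there exist states s1, s2, s' with (s,a1,s1), (s1,a2,s'), (s,a2,s2), (s2,a1,s') all in Tran — then it also satisfies axiom (ii): for every s, every (a1,a2) ∈ I_s, and every s1, s' with (s,a1,s1) ∈ Tran and (s1,a2,s') ∈ Tran, there exists s2 with (s,a2,s2) ∈ Tran and (s2,a1,s') ∈ Tran. -/
import Mathlib

/-- Any automaton with independence (axioms (i) and (ii)') satisfies axiom (ii),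
hence is a distributed asynchronous automaton. -/
theorem automaton_with_independence_is_distributed
    {S E : Type*} (s0 : S) (Tran : S → E → S → Prop) (I : S → E → E → Prop)
    (hirr : ∀ s a, ¬ I s a a) (hsym : ∀ s a b, I s a b → I s b a)
    (det : ∀ s a s' s'', Tran s a s' → Tran s a s'' → s' = s'')
    (axii' : ∀ s a1 a2, I s a1 a2 →
      ∃ s1 s2 s', Tran s a1 s1 ∧ Tran s1 a2 s' ∧ Tran s a2 s2 ∧ Tran s2 a1 s') :
    ∀ s a1 a2 s1 s', I s a1 a2 → Tran s a1 s1 → Tran s1 a2 s' →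
      ∃ s2, Tran s a2 s2 ∧ Tran s2 a1 s' := by
  intro s a1 a2 s1 s' hI h1 h2
  obtain ⟨t1, t2, t', g1, g2, g3, g4⟩ := axii' s a1 a2 hI
  have e1 : t1 = s1 := det s a1 t1 s1 g1 h1
  subst e1
  have e2 : t' = s' := det t1 a2 t' s' g2 h2
  subst e2
  exact ⟨t2, g3, g4⟩
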